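/- Let m ≥ 2 and let α = (α_1,…,α_k), β = (β_1,…,β_l) be compositions of positive integers with α_k ≥ m and β_1 ≥ m; set n = |α|+|β| and r = gcd(|α|−m+1, |β|−m+1). For all 1 ≤ i, j ≤ n−m, one has i ≈ j if and only if i ≡ j (mod r) or i ≡ m−1−j (mod r). Consequently every ≈-class [i] satisfies: [i] ∩ {1,…,r} contains exactly two elements, unless i ≡ m−1−i (mod r), in which case [i] ∩ {1,…,r} = {min [i]}. -/

import Mathlib

open MvPolynomial

/-- Complete homogeneous symmetric polynomial of degree `t` in `N` variables over `ℤ`,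
interpreted as `0` when `t < 0`. -/
noncomputable def hh (N : ℕ) (t : ℤ) : MvPolynomial (Fin N) ℤ :=
  if 0 ≤ t then MvPolynomial.hsymm (Fin N) ℤ t.toNat else 0

/-- `SETf γ` is the set of partial sums `γ₁, γ₁+γ₂, …, γ₁+⋯+γ_{p-1}`
of a composition `γ = (γ₁,…,γ_p)`. -/
def SETf (γ : List ℕ) : Finset ℕ := (Finset.Ico 1 γ.length).image fun p => (γ.take p).sum

/-- The composition of `n` corresponding to a subset `S ⊆ {1,…,n-1}`:
the list of successive differences of the elements of `S ∪ {n}`. -/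
def partsOf (S : Finset ℕ) (n : ℕ) : List ℕ :=
  let L := (insert n S).sort (· ≤ ·)
  L.zipWith (fun b a => b - a) (0 :: L)

/-- An `m`-regular thickened ribbon with exactly one `2 × m` block, encoded as a pair
`α ⊡ β` of compositions with positive parts, `α` ending and `β` starting with a part `≥ m`. -/
structure TRib (m : ℕ) where
  alpha : List ℕ
  beta : List ℕ
  alpha_ne : alpha ≠ []
  beta_ne : beta ≠ []
  alpha_pos : ∀ x ∈ alpha, 0 < x
  beta_pos : ∀ x ∈ beta, 0 < x
  alpha_last : m ≤ alpha.getLastD 0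
  beta_head : m ≤ beta.headD 0

namespace TRib

variable {m : ℕ}

def asz (D : TRib m) : ℕ := D.alpha.sum
def bsz (D : TRib m) : ℕ := D.beta.sum
def nsz (D : TRib m) : ℕ := D.asz + D.bsz

/-- Row lengths from top to bottom: `β_l, …, β_1, α_k, …, α_1`. -/
def rho (D : TRib m) : List ℕ := D.beta.reverse ++ D.alpha.reverse

/-- Number of rows. -/
def len (D : TRib m) : ℕ := D.alpha.length + D.beta.length

/-- `c_i` (0-indexed): `m` at the junction row, `1` otherwise. -/
def cc (D : TRib m) (i : ℕ) : ℕ := if i + 1 = D.beta.length then m else 1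

/-- `λ_i` (0-indexed), from the recurrence `μ_ℓ = 0`, `λ_ℓ = ρ_ℓ`,
`μ_i = λ_{i+1} - c_i`, `λ_i = μ_i + ρ_i`. -/
def lam (D : TRib m) (i : ℕ) : ℤ :=
  (∑ t ∈ Finset.Ico i D.len, (D.rho.getD t 0 : ℤ)) -
    ∑ t ∈ Finset.Ico i (D.len - 1), (D.cc t : ℤ)

/-- `μ_i` (0-indexed). -/
def mu (D : TRib m) (i : ℕ) : ℤ :=
  (∑ t ∈ Finset.Ico (i + 1) D.len, (D.rho.getD t 0 : ℤ)) -
    ∑ t ∈ Finset.Ico i (D.len - 1), (D.cc t : ℤ)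

/-- The skew Schur polynomial `s_D^{(N)} = det(h_{λ_i - μ_j - i + j})`. -/
noncomputable def schur (D : TRib m) (N : ℕ) : MvPolynomial (Fin N) ℤ :=
  Matrix.det (Matrix.of fun i j : Fin D.len =>
    hh N (D.lam i - D.mu j - (i : ℤ) + (j : ℤ)))

/-- Equivalence: equality of skew Schur polynomials in any positive number of variables. -/
def Equiv (D E : TRib m) : Prop := ∀ N : ℕ, 1 ≤ N → D.schur N = E.schur N

/-- The set on which `h_D` takes the value `+`. -/
def hset (D : TRib m) : Finset ℕ :=
  SETf D.alpha ∪ (SETf D.beta).image fun s => D.asz - m + 1 + s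

/-- `h_D(x) = +`. -/
def hplus (D : TRib m) (x : ℕ) : Prop := x ∈ D.hset

/-- The type of `x ∈ {1,…,n-m}`. -/
def typeOf (D : TRib m) (x : ℕ) : ℕ :=
  if x = D.nsz - m + 1 - x then (if x ∈ D.hset then 2 else 0)
  else (if x ∈ D.hset then 1 else 0) + (if D.nsz - m + 1 - x ∈ D.hset then 1 else 0)

/-- Generating relations of the equivalence relation `≈` on `{1,…,n-m}`. -/
def baseRel (D : TRib m) (i j : ℕ) : Prop :=
  (1 ≤ i ∧ i ≤ D.nsz - m ∧ j = D.nsz - m + 1 - i) ∨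
  (1 ≤ i ∧ i ≤ D.asz - 1 ∧ j = D.asz - i) ∨
  (D.asz - m + 2 ≤ i ∧ i ≤ D.nsz - m ∧ j = D.asz + D.nsz + 2 - 2 * m - i)

/-- The equivalence relation `≈`. -/
def erel (D : TRib m) : ℕ → ℕ → Prop := Relation.EqvGen D.baseRel

/-- The `≈`-class `[i]`. -/
def cls (D : TRib m) (i : ℕ) : Set ℕ := {j | D.erel i j}

/-- `r = gcd(|α|-m+1, |β|-m+1)`. -/
def rr (D : TRib m) : ℕ := Nat.gcd (D.asz - m + 1) (D.bsz - m + 1)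

/-! ### Classification of classes in the case `|α| = |β|` -/

/-- The smallest element of the class `[i]`. -/
noncomputable def clsMin (D : TRib m) (i : ℕ) : ℕ := sInf (D.cls i)

/-- `[i] ∈ 𝒜` (case `|α| = |β|`). -/
def classAeq (D : TRib m) (i : ℕ) : Prop :=
  (∀ j ∈ D.cls i, D.typeOf j = 1) ∧
  (D.hplus (D.clsMin i) ↔ ¬ D.hplus (D.asz - D.clsMin i))

/-- `[i] ∈ ℬ` (case `|α| = |β|`). -/
def classBeq (D : TRib m) (i : ℕ) : Prop :=
  ((∀ j ∈ D.cls i, D.typeOf j = 1) ∧ (D.hplus (D.clsMin i) ↔ D.hplus (D.asz - D.clsMin i))) ∨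
  ((∃ j ∈ D.cls i, D.typeOf j = 0 ∨ D.typeOf j = 2) ∧ (∃ j ∈ D.cls i, D.typeOf j = 1))

/-- `[i] ∈ 𝒞` (case `|α| = |β|`). -/
def classCeq (D : TRib m) (i : ℕ) : Prop :=
  ∀ j ∈ D.cls i, D.typeOf j = 0 ∨ D.typeOf j = 2

/-- The set of `k ∈ {1,…,n-m}` with `k ∈ A₁` and `[k] ∈ ℬ` (case `|α| = |β|`). -/
def BsetEq (D : TRib m) : Set ℕ :=
  {k | 1 ≤ k ∧ k ≤ D.nsz - m ∧ D.typeOf k = 1 ∧ D.classBeq k}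

/-- The set of `k ∈ {1,…,n-m}` with `[k] ∈ 𝒜` (case `|α| = |β|`). -/
def AsetEq (D : TRib m) : Set ℕ :=
  {k | 1 ≤ k ∧ k ≤ D.nsz - m ∧ D.classAeq k}

/-- Canonical (case `|α| = |β|`). -/
def canonicalEq (D : TRib m) : Prop :=
  (D.BsetEq.Nonempty ∧ D.hplus (sInf D.BsetEq)) ∨
  (¬ D.BsetEq.Nonempty ∧ D.AsetEq.Nonempty ∧ D.hplus (sInf D.AsetEq)) ∨
  (¬ D.BsetEq.Nonempty ∧ ¬ D.AsetEq.Nonempty)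

/-- Determined (case `|α| = |β|`). -/
def determinedEq (D : TRib m) (x : ℕ) : Prop :=
  ∀ E : TRib m, E.canonicalEq → E.Equiv D → (E.hplus x ↔ D.hplus x)

/-! ### Classification of classes in the case `|α| ≠ |β|` -/

def genA (D : TRib m) (i : ℕ) : Prop :=
  (∀ j ∈ D.cls i, D.typeOf j = 1) ∧
  (∀ j ∈ D.cls i, 1 ≤ j → j + D.rr ≤ D.nsz - m → (D.hplus j ↔ D.hplus (j + D.rr)))

def genB (D : TRib m) (i : ℕ) : Prop :=
  (∃ j ∈ D.cls i, D.typeOf j = 1) ∧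
  (∃ j ∈ D.cls i, 1 ≤ j ∧ j + D.rr ≤ D.nsz - m ∧ ¬(D.hplus j ↔ D.hplus (j + D.rr)))

def genC (D : TRib m) (i : ℕ) : Prop :=
  (∀ j ∈ D.cls i, D.typeOf j = 0) ∨ (∀ j ∈ D.cls i, D.typeOf j = 2)

def genD (D : TRib m) (i : ℕ) : Prop :=
  (∀ j ∈ D.cls i, D.typeOf j = 0 ∨ D.typeOf j = 2) ∧
  (∃ j ∈ D.cls i, D.typeOf j = 0) ∧ (∃ j ∈ D.cls i, D.typeOf j = 2)

/-- Condition (i) for the class `[m-1]`. -/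
def condI (D : TRib m) : Prop :=
  ∀ j, 1 ≤ j → j ≤ D.nsz - m → j % D.rr = (m - 1) % D.rr → j ≠ D.asz →
    (D.hplus j ↔ D.hplus (m - 1))

/-- Condition (ii) for the class `[m-1]`. -/
def condII (D : TRib m) : Prop :=
  ∀ j, 1 ≤ j → j ≤ D.nsz - m → j % D.rr = 0 → j ≠ D.asz - m + 1 →
    (D.hplus j ↔ D.hplus (D.nsz + 2 - 2 * m))

/-- The exceptional set `{|α|-m+1, |α|, |β|-m+1, |β|}`. -/
def excl (D : TRib m) : Set ℕ := {D.asz - m + 1, D.asz, D.bsz - m + 1, D.bsz}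

/-- `[i] ∈ 𝒜` (case `|α| ≠ |β|`). -/
def inA (D : TRib m) (i : ℕ) : Prop :=
  (¬ D.erel i (m - 1) ∧ D.genA i) ∨
  (D.erel i (m - 1) ∧ D.typeOf (m - 1) = 0 ∧ D.genA i) ∨
  (D.erel i (m - 1) ∧ D.typeOf (m - 1) = 1 ∧ D.condI ∧ D.condII)

/-- `[i] ∈ ℬ` (case `|α| ≠ |β|`). -/
def inB (D : TRib m) (i : ℕ) : Prop :=
  (¬ D.erel i (m - 1) ∧ D.genB i) ∨
  (D.erel i (m - 1) ∧ D.typeOf (m - 1) = 0 ∧ D.genB i) ∨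
  (D.erel i (m - 1) ∧ D.typeOf (m - 1) = 1 ∧ ¬(D.condI ∧ D.condII)) ∨
  (D.erel i (m - 1) ∧ D.typeOf (m - 1) = 2 ∧
    ∃ j ∈ D.cls (m - 1), D.typeOf j = 1 ∧ j ∉ D.excl)

/-- `[i] ∈ 𝒞` (case `|α| ≠ |β|`). -/
def inC (D : TRib m) (i : ℕ) : Prop :=
  (¬ D.erel i (m - 1) ∧ D.genC i) ∨
  (D.erel i (m - 1) ∧ D.typeOf (m - 1) = 0 ∧ D.genC i) ∨
  (D.erel i (m - 1) ∧ D.typeOf (m - 1) = 2 ∧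
    (¬ ∃ j ∈ D.cls (m - 1), D.typeOf j = 1 ∧ j ∉ D.excl) ∧ D.condI ∧ D.condII)

/-- `[i] ∈ 𝒟` (case `|α| ≠ |β|`). -/
def inD (D : TRib m) (i : ℕ) : Prop :=
  (¬ D.erel i (m - 1) ∧ D.genD i) ∨
  (D.erel i (m - 1) ∧ D.typeOf (m - 1) = 0 ∧ D.genD i) ∨
  (D.erel i (m - 1) ∧ D.typeOf (m - 1) = 2 ∧
    (¬ ∃ j ∈ D.cls (m - 1), D.typeOf j = 1 ∧ j ∉ D.excl) ∧ ¬(D.condI ∧ D.condII))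

/-- Determined (case `|α| < |β|`; canonical means `|α'| < |β'|`). -/
def determinedLt (D : TRib m) (x : ℕ) : Prop :=
  ∀ E : TRib m, E.asz < E.bsz → E.Equiv D → (E.hplus x ↔ D.hplus x)

end TRib

/-!
The relation `≈` is generated by three reflections whose axes `i + j = n - m + 1`, `i + j = |α|`
and `i + j = |α| + n + 2 - 2m` are all `≡ m - 1` modulo `r`, so the unordered pair
`{i, m - 1 - i}` of residues mod `r` is an invariant of `≈`. Conversely, composing the first
reflection with the other two gives the translations `x ↦ x + (|α| - m + 1)` and
`x ↦ x - (|β| - m + 1)` inside `{1, …, n - m}`; since `n - m` is at least the sum of the two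
steps, Euclid's algorithm turns them into the translation by their gcd `r`. Finally
`{1, …, r}` is a complete residue system, so `[i] ∩ {1, …, r}` consists of the representatives
of `i` and of `m - 1 - i`.
-/

theorem Relation.EqvGen.apply_eq {α : Type*} {β : Sort*} {r : α → α → Prop} {f : α → β}
    (hf : ∀ x y, r x y → f x = f y) {a b : α} (h : Relation.EqvGen r a b) : f a = f b :=
  congrArg (Quot.lift f hf) (Quot.eqvGen_sound h)

def mirrorPair (r c i : ℕ) : Sym2 (ZMod r) := s((i : ZMod r), (c : ZMod r) - i)

theorem mirrorPair_eq_iff {r c i j : ℕ} :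
    mirrorPair r c i = mirrorPair r c j ↔ i ≡ j [MOD r] ∨ i + j ≡ c [MOD r] := by
  simp only [mirrorPair, Sym2.eq_iff, ← ZMod.natCast_eq_natCast_iff, Nat.cast_add]
  constructor
  · rintro (⟨h, -⟩ | ⟨h, -⟩)
    · exact Or.inl h
    · exact Or.inr (eq_sub_iff_add_eq.mp h)
  · rintro (h | h)
    · exact Or.inl ⟨h, by rw [h]⟩
    · exact Or.inr ⟨eq_sub_of_add_eq h, by rw [← h, add_sub_cancel_left]⟩

theorem Nat.ModEq.eq_of_mem_Icc {r u v : ℕ} (h : u ≡ v [MOD r]) (hu : u ∈ Set.Icc 1 r)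
    (hv : v ∈ Set.Icc 1 r) : u = v := by
  obtain ⟨hu₁, hu₂⟩ := hu
  obtain ⟨hv₁, hv₂⟩ := hv
  have h' : u - 1 ≡ v - 1 [MOD r] :=
    Nat.ModEq.add_right_cancel' 1 (by rwa [Nat.sub_add_cancel hu₁, Nat.sub_add_cancel hv₁])
  have := h'.eq_of_lt_of_lt (by omega) (by omega)
  omega

theorem Nat.exists_mem_Icc_modEq {r : ℕ} (hr : 0 < r) (x : ℕ) :
    ∃ u ∈ Set.Icc 1 r, u ≡ x [MOD r] := by
  refine ⟨(x + r - 1) % r + 1, ⟨by omega, Nat.mod_lt _ hr⟩, ?_⟩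
  calc (x + r - 1) % r + 1 ≡ x + r - 1 + 1 [MOD r] := (Nat.mod_modEq _ r).add_right 1
    _ = x + r := Nat.sub_add_cancel (by omega)
    _ ≡ x [MOD r] := Nat.add_modEq_right

theorem Nat.ModEq.le_of_mem_Icc {r p x : ℕ} (h : x ≡ p [MOD r]) (hp : p ∈ Set.Icc 1 r)
    (hx : 1 ≤ x) : p ≤ x := by
  by_contra! hlt
  exact hlt.ne (h.eq_of_mem_Icc ⟨hx, hlt.le.trans hp.2⟩ hp)

def IsPeriodOn (S : ℕ → ℕ → Prop) (N p : ℕ) : Prop :=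
  ∀ x, 1 ≤ x → x + p ≤ N → S x (x + p)

namespace IsPeriodOn

variable {S : ℕ → ℕ → Prop} {N : ℕ}

theorem add_mul {p x : ℕ} (h : IsPeriodOn S N p) (hS : Equivalence S) (hx : 1 ≤ x) :
    ∀ k, x + p * k ≤ N → S x (x + p * k)
  | 0, _ => hS.refl x
  | k + 1, hk => by
    have hpk : p * k ≤ p * (k + 1) := Nat.mul_le_mul_left p k.le_succ
    refine hS.trans (h.add_mul hS hx k (by omega)) ?_
    rw [Nat.mul_succ, ← Nat.add_assoc]
    exact h _ (by omega) (by rwa [Nat.add_assoc, ← Nat.mul_succ])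

theorem of_modEq {p x y : ℕ} (h : IsPeriodOn S N p) (hS : Equivalence S)
    (hx : 1 ≤ x) (hxN : x ≤ N) (hy : 1 ≤ y) (hyN : y ≤ N) (hxy : x ≡ y [MOD p]) : S x y := by
  wlog hle : x ≤ y generalizing x y
  · exact hS.symm (this hy hyN hx hxN hxy.symm (by omega))
  obtain ⟨k, rfl⟩ := (Nat.modEq_iff_exists_eq_add hle).mp hxy
  exact h.add_mul hS hx k hyN

theorem sub {a b : ℕ} (ha : IsPeriodOn S N a) (hb : IsPeriodOn S N b) (hS : Equivalence S)
    (hab : a ≤ b) (hN : a + b ≤ N) : IsPeriodOn S N (b - a) := by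
  intro x hx hxN
  by_cases hxb : x + b ≤ N
  · have hback : S (x + (b - a)) (x + (b - a) + a) := ha _ (by omega) (by omega)
    rw [show x + (b - a) + a = x + b by omega] at hback
    exact hS.trans (hb x hx hxb) (hS.symm hback)
  · have hback : S (x - a) (x - a + a) := ha _ (by omega) (by omega)
    have hfwd : S (x - a) (x - a + b) := hb _ (by omega) (by omega)
    rw [show x - a + a = x by omega] at hback
    rw [show x - a + b = x + (b - a) by omega] at hfwd
    exact hS.trans (hS.symm hback) hfwd

theorem gcd {a b : ℕ} (ha : IsPeriodOn S N a) (hb : IsPeriodOn S N b) (hS : Equivalence S)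
    (hN : a + b ≤ N) : IsPeriodOn S N (Nat.gcd a b) := by
  induction hs : a + b using Nat.strong_induction_on generalizing a b with
  | _ s ih =>
    wlog hab : a ≤ b generalizing a b
    · rw [Nat.gcd_comm]
      exact this hb ha (by omega) (by omega) (by omega)
    rcases Nat.eq_zero_or_pos a with rfl | ha0
    · rwa [Nat.gcd_zero_left]
    rw [← Nat.gcd_sub_self_right hab]
    exact ih b (by omega) ha (ha.sub hb hS hab hN) (by omega) (by omega)

end IsPeriodOn

namespace TRib

variable {m : ℕ} (D : TRib m)

theorem le_asz : m ≤ D.asz := by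
  have hmem : D.alpha.getLastD 0 ∈ D.alpha := by
    rw [List.getLastD_eq_getLast?, List.getLast?_eq_some_getLast D.alpha_ne, Option.getD_some]
    exact List.getLast_mem D.alpha_ne
  exact D.alpha_last.trans (List.single_le_sum (fun x _ => Nat.zero_le x) _ hmem)

theorem le_bsz : m ≤ D.bsz := by
  have hmem : D.beta.headD 0 ∈ D.beta := by
    rw [List.headD_eq_head?, List.head?_eq_some_head D.beta_ne, Option.getD_some]
    exact List.head_mem D.beta_ne
  exact D.beta_head.trans (List.single_le_sum (fun x _ => Nat.zero_le x) _ hmem)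

theorem rr_pos : 0 < D.rr := Nat.gcd_pos_of_pos_left _ (Nat.succ_pos _)

theorem rr_le (hm : 1 ≤ m) : D.rr ≤ D.nsz - m := by
  have hle : D.rr ≤ D.asz - m + 1 := Nat.le_of_dvd (Nat.succ_pos _) (Nat.gcd_dvd_left _ _)
  have := D.le_asz
  have := D.le_bsz
  unfold nsz
  omega

variable {D}

theorem baseRel.one_le {i j : ℕ} (h : D.baseRel i j) : 1 ≤ i ∧ 1 ≤ j := by
  have := D.le_asz
  unfold baseRel nsz at h
  omega

theorem baseRel.add_modEq (hm : 1 ≤ m) {i j : ℕ} (h : D.baseRel i j) :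
    i + j ≡ m - 1 [MOD D.rr] := by
  have ha := Nat.gcd_dvd_left (D.asz - m + 1) (D.bsz - m + 1)
  have hb := Nat.gcd_dvd_right (D.asz - m + 1) (D.bsz - m + 1)
  have := D.le_asz
  have := D.le_bsz
  unfold baseRel nsz at h
  rcases h with ⟨-, hi, rfl⟩ | ⟨-, hi, rfl⟩ | ⟨-, hi, rfl⟩
  · rw [show i + (D.asz + D.bsz - m + 1 - i) = m - 1 + ((D.asz - m + 1) + (D.bsz - m + 1)) by
      omega]
    exact Nat.add_modEq_left_iff.mpr (dvd_add ha hb)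
  · rw [show i + (D.asz - i) = m - 1 + (D.asz - m + 1) by omega]
    exact Nat.add_modEq_left_iff.mpr ha
  · rw [show i + (D.asz + (D.asz + D.bsz) + 2 - 2 * m - i)
        = m - 1 + ((D.asz - m + 1) + (D.asz - m + 1) + (D.bsz - m + 1)) by omega]
    exact Nat.add_modEq_left_iff.mpr (dvd_add (dvd_add ha ha) hb)

theorem one_le_of_erel {i j : ℕ} (h : D.erel i j) (hi : 1 ≤ i) : 1 ≤ j := by
  have := h.apply_eq (f := fun x => min x 1) fun x y hxy => by
    have := hxy.one_le
    omega
  omega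

theorem modEq_or_of_erel (hm : 1 ≤ m) {i j : ℕ} (h : D.erel i j) :
    i ≡ j [MOD D.rr] ∨ i + j ≡ m - 1 [MOD D.rr] :=
  mirrorPair_eq_iff.mp <| h.apply_eq fun _ _ hxy => mirrorPair_eq_iff.mpr (Or.inr (hxy.add_modEq hm))

variable (D)

theorem isPeriodOn_erel_asz : IsPeriodOn D.erel (D.nsz - m) (D.asz - m + 1) := by
  intro x hx hxN
  have := D.le_asz
  have := D.le_bsz
  have h₁ : D.baseRel x (D.nsz - m + 1 - x) := Or.inl ⟨hx, by omega, rfl⟩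
  have h₂ : D.baseRel (D.nsz - m + 1 - x) (x + (D.asz - m + 1)) :=
    Or.inr (Or.inr ⟨by unfold nsz at *; omega, by omega, by unfold nsz at *; omega⟩)
  exact .trans _ _ _ (.rel _ _ h₁) (.rel _ _ h₂)

theorem isPeriodOn_erel_bsz : IsPeriodOn D.erel (D.nsz - m) (D.bsz - m + 1) := by
  intro x hx hxN
  have := D.le_asz
  have := D.le_bsz
  have h₁ : D.baseRel (x + (D.bsz - m + 1)) (D.nsz - m + 1 - (x + (D.bsz - m + 1))) :=
    Or.inl ⟨by omega, hxN, rfl⟩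
  have h₂ : D.baseRel (D.nsz - m + 1 - (x + (D.bsz - m + 1))) x :=
    Or.inr (Or.inl ⟨by unfold nsz at *; omega, by unfold nsz at *; omega, by
      unfold nsz at *; omega⟩)
  exact .symm _ _ (.trans _ _ _ (.rel _ _ h₁) (.rel _ _ h₂))

theorem isPeriodOn_erel_rr (hm : 2 ≤ m) : IsPeriodOn D.erel (D.nsz - m) D.rr := by
  have := D.le_asz
  have := D.le_bsz
  exact D.isPeriodOn_erel_asz.gcd D.isPeriodOn_erel_bsz (Relation.EqvGen.is_equivalence _)
    (by unfold nsz; omega)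

theorem erel_iff (hm : 2 ≤ m) {i j : ℕ} (hi : 1 ≤ i) (hiN : i ≤ D.nsz - m) (hj : 1 ≤ j)
    (hjN : j ≤ D.nsz - m) :
    D.erel i j ↔ i ≡ j [MOD D.rr] ∨ i + j ≡ m - 1 [MOD D.rr] := by
  have hS := Relation.EqvGen.is_equivalence D.baseRel
  refine ⟨modEq_or_of_erel (by omega), fun h => ?_⟩
  rcases h with h | h
  · exact (D.isPeriodOn_erel_rr hm).of_modEq hS hi hiN hj hjN h
  · have hmirror : D.baseRel i (D.nsz - m + 1 - i) := Or.inl ⟨hi, hiN, rfl⟩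
    have hres : D.nsz - m + 1 - i ≡ j [MOD D.rr] :=
      Nat.ModEq.add_left_cancel' i ((hmirror.add_modEq (by omega)).trans h.symm)
    exact hS.trans (.rel _ _ hmirror)
      ((D.isPeriodOn_erel_rr hm).of_modEq hS (by omega) (by omega) hj hjN hres)

theorem mem_cls_inter_Icc_rr_iff (hm : 2 ≤ m) {i j : ℕ} (hi : 1 ≤ i) (hiN : i ≤ D.nsz - m) :
    j ∈ D.cls i ∩ Set.Icc 1 D.rr ↔
      j ∈ Set.Icc 1 D.rr ∧ (i ≡ j [MOD D.rr] ∨ i + j ≡ m - 1 [MOD D.rr]) := by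
  rw [Set.mem_inter_iff, and_comm]
  exact and_congr_right fun hj => D.erel_iff hm hi hiN hj.1 (hj.2.trans (D.rr_le (by omega)))

theorem ncard_cls_inter_Icc_rr (hm : 2 ≤ m) {i : ℕ} (hi : 1 ≤ i) (hiN : i ≤ D.nsz - m)
    (hii : ¬ i + i ≡ m - 1 [MOD D.rr]) : (D.cls i ∩ Set.Icc 1 D.rr).ncard = 2 := by
  obtain ⟨p, hp, hpi⟩ := Nat.exists_mem_Icc_modEq D.rr_pos i
  obtain ⟨q, hq, hqi⟩ := Nat.exists_mem_Icc_modEq D.rr_pos (m - 1 + D.rr * i - i)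
  have hiq : i + q ≡ m - 1 [MOD D.rr] := by
    have : i ≤ D.rr * i := Nat.le_mul_of_pos_left i D.rr_pos
    calc i + q ≡ i + (m - 1 + D.rr * i - i) [MOD D.rr] := hqi.add_left i
      _ = m - 1 + D.rr * i := by omega
      _ ≡ m - 1 [MOD D.rr] := Nat.add_modEq_left_iff.mpr (dvd_mul_right _ _)
  have hpq : p ≠ q := by
    rintro rfl
    exact hii ((hpi.symm.add_left i).trans hiq)
  rw [show D.cls i ∩ Set.Icc 1 D.rr = {p, q} from ?_, Set.ncard_pair hpq]
  ext j
  rw [D.mem_cls_inter_Icc_rr_iff hm hi hiN]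
  constructor
  · rintro ⟨hj, hij | hij⟩
    · exact Or.inl ((hpi.trans hij).symm.eq_of_mem_Icc hj hp)
    · exact Or.inr ((Nat.ModEq.add_left_cancel' i (hij.trans hiq.symm)).eq_of_mem_Icc hj hq)
  · rintro (rfl | rfl)
    · exact ⟨hp, Or.inl hpi.symm⟩
    · exact ⟨hq, Or.inr hiq⟩

theorem cls_inter_Icc_rr_eq_singleton (hm : 2 ≤ m) {i : ℕ} (hi : 1 ≤ i) (hiN : i ≤ D.nsz - m)
    (hii : i + i ≡ m - 1 [MOD D.rr]) : D.cls i ∩ Set.Icc 1 D.rr = {sInf (D.cls i)} := by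
  have hcls : ∀ j ∈ D.cls i, j ≡ i [MOD D.rr] := fun j hj =>
    (modEq_or_of_erel (by omega) hj).elim Nat.ModEq.symm
      fun h => Nat.ModEq.add_left_cancel' i (h.trans hii.symm)
  obtain ⟨p, hp, hpi⟩ := Nat.exists_mem_Icc_modEq D.rr_pos i
  have hpcls : p ∈ D.cls i :=
    (D.mem_cls_inter_Icc_rr_iff hm hi hiN).mpr ⟨hp, Or.inl hpi.symm⟩ |>.1
  have hinf_mem := Nat.sInf_mem ⟨p, hpcls⟩
  have hinf : sInf (D.cls i) = p :=
    le_antisymm (Nat.sInf_le hpcls)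
      (((hcls _ hinf_mem).trans hpi.symm).le_of_mem_Icc hp (one_le_of_erel hinf_mem hi))
  rw [hinf]
  ext j
  constructor
  · rintro ⟨hj, hjr⟩
    exact ((hcls j hj).trans hpi.symm).eq_of_mem_Icc hjr hp
  · rintro rfl
    exact ⟨hpcls, hp⟩

end TRib

open TRib in
/-- Characterization of the equivalence relation `≈` on `{1,…,n-m}`
(Lemma `lem:symmetry`). -/
theorem statement5 (m : ℕ) (hm : 2 ≤ m) (D : TRib m) :
    (∀ i j, 1 ≤ i → i ≤ D.nsz - m → 1 ≤ j → j ≤ D.nsz - m →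
      (D.erel i j ↔ (i % D.rr = j % D.rr ∨ (i + j) % D.rr = (m - 1) % D.rr))) ∧
    (∀ i, 1 ≤ i → i ≤ D.nsz - m →
      (¬((i + i) % D.rr = (m - 1) % D.rr) →
        (D.cls i ∩ Set.Icc 1 D.rr).ncard = 2) ∧
      ((i + i) % D.rr = (m - 1) % D.rr →
        D.cls i ∩ Set.Icc 1 D.rr = {sInf (D.cls i)})) :=
  ⟨fun _ _ hi hiN hj hjN => D.erel_iff hm hi hiN hj hjN,
    fun _ hi hiN => ⟨D.ncard_cls_inter_Icc_rr hm hi hiN, D.cls_inter_Icc_rr_eq_singleton hm hi hiN⟩⟩
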